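/- Let g ∈ ℬ([0,∞)ⁿ). Then: (1) (g[e])*(x) = +∞ for every x ∉ [0,∞)ⁿ; (2) (g[e])*(x) > −∞ for every x ∈ ℝⁿ; and (3) (g[e])*(x)/‖x‖ → +∞ as ‖x‖ → ∞ with x ∈ [0,∞)ⁿ. -/

import Mathlib

/-!
For `x ∉ [0,∞)ⁿ` pick a coordinate with `x_j < 0` and send `y = -t e_j` to `-∞` along that
axis: `⟨x, y⟩ = -t x_j → +∞`, while `e^y` converges inside the orthant, so `g[e](y)` stays
bounded by continuity of `g`. For `x` in the orthant, `⟨x, y⟩ ≤ ⟨x, e^y⟩ ≤ ‖x‖ ‖e^y‖` because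
`y ≤ e^y`, and the superlinear growth of `g` bounds `‖x‖ ‖z‖ - g z` on the orthant, so the
conjugate is finite. Testing it at `y = R x / ‖x‖` gives `(g[e])*(x) ≥ R ‖x‖ - max_{‖y‖ ≤ R} g[e]`
for every `R`, whence the superlinear growth of the conjugate.
-/

open Filter
open scoped BigOperators Topology

noncomputable section

abbrev En (n : ℕ) := EuclideanSpace ℝ (Fin n)

/-- The closed positive orthant `[0,∞)ⁿ`. -/
def orthant (n : ℕ) : Set (En n) := {x | ∀ j, 0 ≤ x j}

/-- `g[e]`, the coordinatewise exponential substitution `g[e](x) = g(e^{x₁},…,e^{xₙ})`. -/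
def expComp {n : ℕ} (g : En n → ℝ) : En n → ℝ := fun x => g (WithLp.toLp 2 (fun j => Real.exp (x j)))

/-- The Young–Fenchel conjugate `g*(x) = sup_y (⟨x,y⟩ - g(y))`. -/
def starC {n : ℕ} (g : En n → ℝ) (x : En n) : ℝ := ⨆ y : En n, (∑ j, x j * y j - g y)

/-- `g ∈ ℬ([0,∞)ⁿ)`: `g` is continuous on the orthant and `g(x)/‖x‖ → +∞`
as `x → ∞` within the orthant. -/
def memB {n : ℕ} (g : En n → ℝ) : Prop :=
  ContinuousOn g (orthant n) ∧
    Tendsto (fun x : En n => g x / ‖x‖) (cocompact (En n) ⊓ 𝓟 (orthant n)) atTop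

/-- The Young–Fenchel conjugate of a real-valued function, with values in the
extended reals: `g*(x) = sup_y (⟨x,y⟩ - g(y)) ∈ [-∞,+∞]`. -/
def estar {n : ℕ} (g : En n → ℝ) (x : En n) : EReal :=
  ⨆ y : En n, (((∑ j, x j * y j - g y : ℝ) : EReal))

open Set
open scoped RealInnerProductSpace

section Superlinear

variable {E : Type*} [NormedAddCommGroup E] {s : Set E} {g : E → ℝ}

lemma eventually_mul_norm_le_of_tendsto_div_norm
    (hg : Tendsto (fun z => g z / ‖z‖) (cocompact E ⊓ 𝓟 s) atTop) (c : ℝ) :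
    ∀ᶠ z in cocompact E ⊓ 𝓟 s, c * ‖z‖ ≤ g z := by
  filter_upwards [hg.eventually_ge_atTop (max c 1)] with z hz
  have hpos : 0 < ‖z‖ := by
    refine (norm_nonneg z).lt_of_ne fun h => ?_
    rw [← h, div_zero] at hz
    linarith [le_max_right c 1]
  calc c * ‖z‖ ≤ max c 1 * ‖z‖ := by gcongr; exact le_max_left c 1
    _ ≤ g z := (le_div_iff₀ hpos).mp hz

lemma bddAbove_mul_norm_sub_image (hs : IsClosed s) (hc : ContinuousOn g s)
    (hg : Tendsto (fun z => g z / ‖z‖) (cocompact E ⊓ 𝓟 s) atTop) (c : ℝ) :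
    BddAbove ((fun z => c * ‖z‖ - g z) '' s) := by
  obtain ⟨K, hK, hKs⟩ := mem_cocompact.mp
    (eventually_inf_principal.mp (eventually_mul_norm_le_of_tendsto_div_norm hg c))
  obtain ⟨B, hB⟩ := (hK.inter_left hs).bddAbove_image
    ((continuous_const.mul continuous_norm).continuousOn.sub (hc.mono inter_subset_left))
  refine ⟨max B 0, ?_⟩
  rintro _ ⟨z, hz, rfl⟩
  by_cases hzK : z ∈ K
  · exact (hB ⟨z, ⟨hz, hzK⟩, rfl⟩).trans (le_max_left _ _)
  · exact (sub_nonpos.mpr (hKs hzK hz)).trans (le_max_right _ _)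

end Superlinear

section Conjugate

variable {n : ℕ}

lemma sum_mul_eq_inner (x y : En n) : ∑ j, x j * y j = ⟪x, y⟫ := by
  simp [PiLp.inner_apply, mul_comm]

lemma coe_le_estar (f : En n → ℝ) (x y : En n) :
    ((∑ j, x j * y j - f y : ℝ) : EReal) ≤ estar f x :=
  le_iSup (fun y : En n => ((∑ j, x j * y j - f y : ℝ) : EReal)) y

lemma bot_lt_estar (f : En n → ℝ) (x : En n) : ⊥ < estar f x :=
  (EReal.bot_lt_coe _).trans_le (coe_le_estar f x 0)

lemma estar_eq_top_of_tendsto {ι : Type*} {l : Filter ι} [l.NeBot] {f : En n → ℝ} {x : En n}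
    (y : ι → En n) (h : Tendsto (fun i => ∑ j, x j * y i j - f (y i)) l atTop) :
    estar f x = ⊤ :=
  top_le_iff.mp <| le_of_tendsto' (EReal.tendsto_coe_atTop.comp h) fun i => coe_le_estar f x (y i)

lemma le_toReal_estar {f : En n → ℝ} {x : En n} {B : ℝ}
    (hB : ∀ y, ∑ j, x j * y j - f y ≤ B) (y : En n) :
    ∑ j, x j * y j - f y ≤ (estar f x).toReal := by
  have hlt : estar f x ≠ ⊤ :=
    ((iSup_le fun y => EReal.coe_le_coe_iff.mpr (hB y)).trans_lt (EReal.coe_lt_top B)).ne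
  exact (EReal.toReal_coe _).ge.trans
    (EReal.toReal_le_toReal (coe_le_estar f x y) (EReal.coe_ne_bot _) hlt)

lemma mul_norm_sub_le_toReal_estar {f : En n → ℝ} {x : En n} {B R C : ℝ}
    (hB : ∀ y, ∑ j, x j * y j - f y ≤ B) (hR : 0 ≤ R) (hC : ∀ y, ‖y‖ ≤ R → f y ≤ C) :
    R * ‖x‖ - C ≤ (estar f x).toReal := by
  set y : En n := (R / ‖x‖) • x
  have hy : ‖y‖ ≤ R := by
    rcases eq_or_ne ‖x‖ 0 with h | h
    · simpa [y, h] using hR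
    · simp [y, norm_smul, abs_of_nonneg hR, h]
  have hxy : ∑ j, x j * y j = R * ‖x‖ := by
    rw [sum_mul_eq_inner, real_inner_smul_right, real_inner_self_eq_norm_sq]
    rcases eq_or_ne ‖x‖ 0 with h | h
    · simp [h]
    · field_simp
  calc R * ‖x‖ - C ≤ ∑ j, x j * y j - f y := by rw [hxy]; linarith [hC y hy]
    _ ≤ (estar f x).toReal := le_toReal_estar hB y

end Conjugate

section ExpSubstitution

variable {n : ℕ} {g : En n → ℝ}

lemma isClosed_orthant : IsClosed (orthant n) := by
  simp only [orthant, ofPred_forall]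
  exact isClosed_iInter fun j => isClosed_le continuous_const (PiLp.continuous_apply 2 _ j)

-- `expComp g` is definitionally `g ∘ expVec`.
def expVec (y : En n) : En n := WithLp.toLp 2 fun j => Real.exp (y j)

lemma expVec_mem_orthant (y : En n) : expVec y ∈ orthant n := fun _ => (Real.exp_pos _).le

lemma continuous_expVec : Continuous (expVec (n := n)) :=
  (PiLp.continuous_toLp 2 _).comp
    (continuous_pi fun j => Real.continuous_exp.comp (PiLp.continuous_apply 2 _ j))

lemma continuous_expComp (hg : ContinuousOn g (orthant n)) : Continuous (expComp g) :=
  hg.comp_continuous continuous_expVec expVec_mem_orthant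

lemma sum_mul_le_inner_expVec {x : En n} (hx : x ∈ orthant n) (y : En n) :
    ∑ j, x j * y j ≤ ⟪x, expVec y⟫ := by
  rw [← sum_mul_eq_inner]
  exact Finset.sum_le_sum fun j _ => mul_le_mul_of_nonneg_left
    (by simpa [expVec] using (le_add_of_nonneg_right zero_le_one).trans (Real.add_one_le_exp (y j)))
    (hx j)

lemma estar_expComp_eq_top (hg : ContinuousOn g (orthant n)) {x : En n} (hx : x ∉ orthant n) :
    estar (expComp g) x = ⊤ := by
  obtain ⟨j, hj⟩ : ∃ j, x j < 0 := by simpa [orthant] using hx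
  set y : ℝ → En n := fun t => EuclideanSpace.single j (-t)
  set z : En n := WithLp.toLp 2 fun i => if i = j then 0 else 1
  have hz : z ∈ orthant n := fun i => by by_cases h : i = j <;> simp [z, h]
  have hlim : Tendsto (fun t => expVec (y t)) atTop (𝓝[orthant n] z) := by
    refine tendsto_nhdsWithin_of_tendsto_nhds_of_eventually_within _ ?_
      (Eventually.of_forall fun t => expVec_mem_orthant (y t))
    refine ((PiLp.continuous_toLp 2 _).tendsto _).comp (tendsto_pi_nhds.2 fun i => ?_)
    by_cases h : i = j
    · simpa [y, z, h] using Real.tendsto_exp_neg_atTop_nhds_zero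
    · simp [y, h]
  have hgy : Tendsto (fun t => expComp g (y t)) atTop (𝓝 (g z)) := (hg z hz).tendsto.comp hlim
  have hxy : ∀ t, ∑ i, x i * y t i = -x j * t := fun t => by simp [y, mul_comm]
  refine estar_eq_top_of_tendsto (l := atTop) y ?_
  simp_rw [hxy, sub_eq_add_neg]
  exact (tendsto_id.const_mul_atTop (neg_pos.2 hj)).atTop_add hgy.neg

lemma exists_sum_mul_sub_expComp_le (hg : memB g) {x : En n} (hx : x ∈ orthant n) :
    ∃ B, ∀ y, ∑ j, x j * y j - expComp g y ≤ B := by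
  obtain ⟨B, hB⟩ := bddAbove_mul_norm_sub_image isClosed_orthant hg.1 hg.2 ‖x‖
  refine ⟨B, fun y => ?_⟩
  calc ∑ j, x j * y j - expComp g y ≤ ‖x‖ * ‖expVec y‖ - g (expVec y) :=
        sub_le_sub_right ((sum_mul_le_inner_expVec hx y).trans (real_inner_le_norm _ _)) _
    _ ≤ B := hB ⟨_, expVec_mem_orthant y, rfl⟩

lemma tendsto_toReal_estar_expComp_div_norm (hg : memB g) :
    Tendsto (fun x => (estar (expComp g) x).toReal / ‖x‖)
      (cocompact (En n) ⊓ 𝓟 (orthant n)) atTop := by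
  refine tendsto_atTop.2 fun K => ?_
  set R := max K 0 + 1
  obtain ⟨C, hC⟩ := (isCompact_closedBall (0 : En n) R).bddAbove_image
    (continuous_expComp hg.1).continuousOn
  have hnorm : Tendsto (‖·‖) (cocompact (En n) ⊓ 𝓟 (orthant n)) atTop :=
    tendsto_norm_cocompact_atTop.mono_left inf_le_left
  filter_upwards [hnorm.eventually_ge_atTop (max C 1), mem_inf_of_right (mem_principal_self _)]
    with x hxC hx
  obtain ⟨B, hB⟩ := exists_sum_mul_sub_expComp_le hg hx
  have hlow := mul_norm_sub_le_toReal_estar hB (by positivity : 0 ≤ R)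
    fun y hy => hC ⟨y, by simpa using hy, rfl⟩
  have hxpos : 0 < ‖x‖ := zero_lt_one.trans_le ((le_max_right C 1).trans hxC)
  rw [le_div_iff₀ hxpos]
  nlinarith [le_max_left C 1, le_max_left K 0, hxpos.le]

end ExpSubstitution

theorem stmt16 (n : ℕ) (g : En n → ℝ) (hg : memB g) :
    (∀ x : En n, x ∉ orthant n → estar (expComp g) x = ⊤) ∧
    (∀ x : En n, ⊥ < estar (expComp g) x) ∧
    Tendsto (fun x : En n => (estar (expComp g) x).toReal / ‖x‖)
      (cocompact (En n) ⊓ 𝓟 (orthant n)) atTop :=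
  ⟨fun _ hx => estar_expComp_eq_top hg.1 hx, bot_lt_estar _,
    tendsto_toReal_estar_expComp_div_norm hg⟩
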